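/- For all nonempty types X and Y, the double clique DC(X,Y) has an irreducible proper distinguishing vertex colouring, i.e., there exist a type C and a proper distinguishing vertex colouring c : V(DC(X,Y)) → C such that no nontrivial merCge of two colours of c is a proper distinguishing vertex colouring. -/
import Mathlib


universe u v w

/-- A vertex colouring `c` is distinguishing if the identity is the only
automorphism of `G` preserving `c`. -/
def VertexDistinguishing {V : Type u} {C : Type w} (G : SimpleGraph V) (c : V → C) : Prop :=
  ∀ φ : G ≃g G, (∀ x : V, c (φ x) = c x) → ∀ x : V, φ x = x

/-- A vertex colouring is proper if adjacent vertices receive distinct colours. -/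
def ProperVertexColoring {V : Type u} {C : Type w} (G : SimpleGraph V) (c : V → C) : Prop :=
  ∀ u v : V, G.Adj u v → c u ≠ c v

open Classical in
/-- The map merging colour `b` into colour `a`. -/
noncomputable def mergeMap {C : Type w} (a b : C) : C → C :=
  fun x => if x = b then a else x

/-- The base relation of the double clique `DC(X, Y)`: the centre `x'` (encoded
as `Sum.inr (Sum.inr true)`) is joined to the centre `y'` (encoded as
`Sum.inr (Sum.inr false)`) and to every vertex of `X`, the centre `y'` is joined
to every vertex of `Y`, and any two distinct vertices of `X` (resp. of `Y`) are
joined.  (`SimpleGraph.fromRel` removes the loops.) -/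
def DCRel (X : Type u) (Y : Type v) : (X ⊕ Y ⊕ Bool) → (X ⊕ Y ⊕ Bool) → Prop
  | Sum.inl _, Sum.inr (Sum.inr true) => True
  | Sum.inr (Sum.inl _), Sum.inr (Sum.inr false) => True
  | Sum.inr (Sum.inr true), Sum.inr (Sum.inr false) => True
  | Sum.inl _, Sum.inl _ => True
  | Sum.inr (Sum.inl _), Sum.inr (Sum.inl _) => True
  | _, _ => False

/-- The double clique `DC(X, Y)`. -/
def DC (X : Type u) (Y : Type v) : SimpleGraph (X ⊕ Y ⊕ Bool) :=
  SimpleGraph.fromRel (DCRel X Y)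

section Aux

universe u1 u2 u3

/-- Bundled goodness of a colouring. -/
def GoodCol {V : Type u1} {C : Type u2} (G : SimpleGraph V) (c : V → C) : Prop :=
  ProperVertexColoring G c ∧ VertexDistinguishing G c ∧
    ∀ a b : C, a ≠ b → b ∈ Set.range c →
      ¬ (ProperVertexColoring G (mergeMap a b ∘ c) ∧
          VertexDistinguishing G (mergeMap a b ∘ c))

lemma goodCol_comp {V : Type u1} {W : Type u2} {C : Type u3}
    {G : SimpleGraph V} {H : SimpleGraph W} (ψ : G ≃g H) {c : W → C}
    (hc : GoodCol H c) : GoodCol G (c ∘ ψ) := by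
  obtain ⟨hP, hD, hM⟩ := hc
  refine ⟨?_, ?_, ?_⟩
  · intro x y hxy
    exact hP (ψ x) (ψ y) (ψ.map_rel_iff.mpr hxy)
  · intro φ hφ x
    have hφ' : ∀ w, c (((ψ.symm.trans φ).trans ψ) w) = c w := by
      intro w
      have := hφ (ψ.symm w)
      simp only [RelIso.trans_apply, Function.comp_apply] at this ⊢
      simpa using this
    have := hD ((ψ.symm.trans φ).trans ψ) hφ' (ψ x)
    simp only [RelIso.trans_apply, Equiv.symm_apply_apply] at this
    exact ψ.injective (by simpa using this)
  · rintro a b hab ⟨x, hx⟩ ⟨hP', hD'⟩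
    refine hM a b hab ⟨ψ x, hx⟩ ⟨?_, ?_⟩
    · intro u w huw
      have := hP' (ψ.symm u) (ψ.symm w) (ψ.symm.map_rel_iff.mpr huw)
      simpa using this
    · intro φ hφ w
      have hφ' : ∀ x, (mergeMap a b ∘ c ∘ ψ) (((ψ.trans φ).trans ψ.symm) x)
          = (mergeMap a b ∘ c ∘ ψ) x := by
        intro x
        have := hφ (ψ x)
        simp only [RelIso.trans_apply, Function.comp_apply] at this ⊢
        simpa using this
      have := hD' ((ψ.trans φ).trans ψ.symm) hφ' (ψ.symm w)
      simp only [RelIso.trans_apply, Equiv.apply_symm_apply] at this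
      exact ψ.symm.injective (by simpa using this)

variable {X : Type u} {Y : Type v}

lemma dc_adj (u w : X ⊕ Y ⊕ Bool) :
    (DC X Y).Adj u w ↔ u ≠ w ∧ (DCRel X Y u w ∨ DCRel X Y w u) := by
  simp [DC, SimpleGraph.fromRel_adj]

lemma dc_adj_xx (x1 x2 : X) :
    (DC X Y).Adj (Sum.inl x1) (Sum.inl x2) ↔ x1 ≠ x2 := by
  simp [dc_adj, DCRel]

lemma dc_adj_yy (y1 y2 : Y) :
    (DC X Y).Adj (Sum.inr (Sum.inl y1)) (Sum.inr (Sum.inl y2)) ↔ y1 ≠ y2 := by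
  simp [dc_adj, DCRel]

lemma dc_adj_x_xp (x : X) :
    (DC X Y).Adj (Sum.inl x) (Sum.inr (Sum.inr true)) := by
  simp [dc_adj, DCRel]

lemma dc_adj_y_yp (y : Y) :
    (DC X Y).Adj (Sum.inr (Sum.inl y)) (Sum.inr (Sum.inr false)) := by
  simp [dc_adj, DCRel]

lemma dc_adj_xp_yp :
    (DC X Y).Adj (Sum.inr (Sum.inr true)) (Sum.inr (Sum.inr false) : X ⊕ Y ⊕ Bool) := by
  simp [dc_adj, DCRel]

lemma dc_not_adj_x_y (x : X) (y : Y) :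
    ¬ (DC X Y).Adj (Sum.inl x) (Sum.inr (Sum.inl y)) := by
  simp [dc_adj, DCRel]

lemma dc_not_adj_x_yp (x : X) :
    ¬ (DC X Y).Adj (Sum.inl x) (Sum.inr (Sum.inr false)) := by
  simp [dc_adj, DCRel]

lemma dc_not_adj_y_xp (y : Y) :
    ¬ (DC X Y).Adj (Sum.inr (Sum.inl y)) (Sum.inr (Sum.inr true) : X ⊕ Y ⊕ Bool) := by
  simp [dc_adj, DCRel]

/-- Neighbours of `x'`. -/
lemma dc_nbr_xp {w : X ⊕ Y ⊕ Bool}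
    (h : (DC X Y).Adj w (Sum.inr (Sum.inr true))) :
    (∃ x, w = Sum.inl x) ∨ w = Sum.inr (Sum.inr false) := by
  rcases w with x | y | b
  · exact Or.inl ⟨x, rfl⟩
  · exact absurd h (dc_not_adj_y_xp y)
  · cases b
    · exact Or.inr rfl
    · exact absurd h ((DC X Y).irrefl)

/-- Neighbours of `y'`. -/
lemma dc_nbr_yp {w : X ⊕ Y ⊕ Bool}
    (h : (DC X Y).Adj w (Sum.inr (Sum.inr false))) :
    (∃ y, w = Sum.inr (Sum.inl y)) ∨ w = Sum.inr (Sum.inr true) := by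
  rcases w with x | y | b
  · exact absurd h (by exact fun hh => dc_not_adj_x_yp x hh)
  · exact Or.inl ⟨y, rfl⟩
  · cases b
    · exact absurd h ((DC X Y).irrefl)
    · exact Or.inr rfl

/-- The swap isomorphism `DC X Y ≃g DC Y X`. -/
def dcSwapEquiv : (X ⊕ Y ⊕ Bool) ≃ (Y ⊕ X ⊕ Bool) where
  toFun v := match v with
    | Sum.inl x => Sum.inr (Sum.inl x)
    | Sum.inr (Sum.inl y) => Sum.inl y
    | Sum.inr (Sum.inr b) => Sum.inr (Sum.inr (!b))
  invFun v := match v with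
    | Sum.inl y => Sum.inr (Sum.inl y)
    | Sum.inr (Sum.inl x) => Sum.inl x
    | Sum.inr (Sum.inr b) => Sum.inr (Sum.inr (!b))
  left_inv v := by rcases v with x | y | b <;> simp
  right_inv v := by rcases v with y | x | b <;> simp

def dcSwap : DC X Y ≃g DC Y X where
  toEquiv := dcSwapEquiv
  map_rel_iff' := by
    intro u w
    rcases u with x | y | b <;> rcases w with x' | y' | b' <;>
      first
        | (cases b <;> cases b' <;>
            simp [dcSwapEquiv, dc_adj, DCRel])
        | (try cases b) <;> (try cases b') <;>
            simp [dcSwapEquiv, dc_adj, DCRel, Sum.inl_injective.ne_iff,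
              Sum.inr_injective.ne_iff]

/-- The colouring used in the key construction. -/
def keyCol [DecidableEq X] (f : X ↪ Y) (x0 : X) : (X ⊕ Y ⊕ Bool) → ULift.{w} (Option Y)
  | Sum.inl x => if x = x0 then ⟨none⟩ else ⟨some (f x)⟩
  | Sum.inr (Sum.inl y) => ⟨some y⟩
  | Sum.inr (Sum.inr true) => ⟨some (f x0)⟩
  | Sum.inr (Sum.inr false) => ⟨none⟩

variable [DecidableEq X] (f : X ↪ Y) (x0 : X)

lemma keyCol_eq_none {w : X ⊕ Y ⊕ Bool} (h : keyCol f x0 w = ⟨none⟩) :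
    w = Sum.inl x0 ∨ w = Sum.inr (Sum.inr false) := by
  rcases w with x | y | b
  · left
    simp only [keyCol] at h
    split_ifs at h with hx
    · rw [hx]
    · simp at h
  · simp [keyCol] at h
  · cases b
    · right; rfl
    · simp [keyCol] at h

lemma keyCol_eq_y0 {w : X ⊕ Y ⊕ Bool} (h : keyCol f x0 w = ⟨some (f x0)⟩) :
    w = Sum.inr (Sum.inr true) ∨ w = Sum.inr (Sum.inl (f x0)) := by
  rcases w with x | y | b
  · exfalso
    simp only [keyCol] at h
    split_ifs at h with hx
    · simp at h
    · simp only [ULift.ext_iff, Option.some.injEq] at h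
      exact hx (f.injective h)
  · right
    simp only [keyCol, ULift.ext_iff, Option.some.injEq] at h
    rw [h]
  · cases b
    · simp [keyCol] at h
    · left; rfl

lemma keyCol_inj_X {x1 x2 : X} (h : keyCol f x0 (Sum.inl x1) = keyCol f x0 (Sum.inl x2)) :
    x1 = x2 := by
  simp only [keyCol] at h
  split_ifs at h with h1 h2 h2 <;>
    simp only [ULift.ext_iff, Option.some.injEq, reduceCtorEq] at h
  · rw [h1, h2]
  · exact f.injective h

/-- Key construction: given an embedding `X ↪ Y`, a good colouring of `DC X Y`
with colours `ULift (Option Y)`. -/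
lemma dc_key' : GoodCol (DC X Y) (keyCol.{u, v, w} f x0) := by
  refine ⟨?_, ?_, ?_⟩
  · -- proper
    intro a b h
    rcases a with x1 | y1 | b1 <;> rcases b with x2 | y2 | b2
    · rw [dc_adj_xx] at h
      simp only [keyCol]
      split_ifs with h1 h2 h2 <;>
        simp only [ne_eq, ULift.ext_iff, Option.some.injEq, reduceCtorEq,
          not_false_eq_true, f.injective.eq_iff]
      · exact fun hh => h (h1.trans h2.symm)
      · exact h
    · exact absurd h (dc_not_adj_x_y x1 y2)
    · cases b2
      · exact absurd h (dc_not_adj_x_yp x1)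
      · simp only [keyCol]
        split_ifs with h1 <;>
          simp [f.injective.eq_iff]
        exact h1
    · exact absurd h (fun hh => dc_not_adj_x_y x2 y1 hh.symm)
    · rw [dc_adj_yy] at h
      simp [keyCol, h]
    · cases b2
      · simp [keyCol]
      · exact absurd h (dc_not_adj_y_xp y1)
    · cases b1
      · exact absurd h (fun hh => dc_not_adj_x_yp x2 hh.symm)
      · simp only [keyCol]
        split_ifs with h1 <;> simp [f.injective.eq_iff]
        exact fun hh => h1 hh.symm
    · cases b1
      · simp [keyCol]
      · exact absurd h (fun hh => dc_not_adj_y_xp y2 hh.symm)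
    · cases b1 <;> cases b2 <;>
        first
          | exact absurd h ((DC X Y).irrefl)
          | simp [keyCol]
  · -- distinguishing
    intro φ hφ v
    have hA : φ (Sum.inr (Sum.inr true)) = Sum.inr (Sum.inr true) := by
      have hc : keyCol.{u, v, w} f x0 (φ (Sum.inr (Sum.inr true))) = ⟨some (f x0)⟩ :=
        hφ (Sum.inr (Sum.inr true))
      rcases keyCol_eq_y0 f x0 hc with h | h
      · exact h
      · exfalso
        have hc0 : keyCol.{u, v, w} f x0 (φ (Sum.inl x0)) = ⟨none⟩ := by
          rw [hφ (Sum.inl x0)]; simp [keyCol]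
        have hadj0 : (DC X Y).Adj (φ (Sum.inl x0)) (Sum.inr (Sum.inl (f x0))) := by
          have := φ.map_rel_iff.mpr (dc_adj_x_xp (Y := Y) x0)
          rwa [h] at this
        rcases keyCol_eq_none f x0 hc0 with h1 | h1
        · rw [h1] at hadj0
          exact dc_not_adj_x_y x0 (f x0) hadj0
        · have hcy : keyCol.{u, v, w} f x0 (φ (Sum.inr (Sum.inr false))) = ⟨none⟩ := by
            rw [hφ (Sum.inr (Sum.inr false))]; rfl
          have hadjy : (DC X Y).Adj (φ (Sum.inr (Sum.inr false))) (Sum.inr (Sum.inl (f x0))) := by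
            have := φ.map_rel_iff.mpr (dc_adj_xp_yp (X := X) (Y := Y)).symm
            rwa [h] at this
          rcases keyCol_eq_none f x0 hcy with h2 | h2
          · rw [h2] at hadjy
            exact dc_not_adj_x_y x0 (f x0) hadjy
          · have : (Sum.inl x0 : X ⊕ Y ⊕ Bool) = Sum.inr (Sum.inr false) :=
              φ.injective (h1.trans h2.symm)
            simp at this
    have hB : φ (Sum.inr (Sum.inr false)) = Sum.inr (Sum.inr false) := by
      have hc : keyCol.{u, v, w} f x0 (φ (Sum.inr (Sum.inr false))) = ⟨none⟩ :=
        hφ (Sum.inr (Sum.inr false))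
      rcases keyCol_eq_none f x0 hc with h | h
      · exfalso
        have hcy : keyCol.{u, v, w} f x0 (φ (Sum.inr (Sum.inl (f x0)))) = ⟨some (f x0)⟩ :=
          hφ (Sum.inr (Sum.inl (f x0)))
        have hadjy : (DC X Y).Adj (φ (Sum.inr (Sum.inl (f x0)))) (Sum.inl x0) := by
          have := φ.map_rel_iff.mpr (dc_adj_y_yp (X := X) (f x0))
          rwa [h] at this
        rcases keyCol_eq_y0 f x0 hcy with h1 | h1
        · have : (Sum.inr (Sum.inl (f x0)) : X ⊕ Y ⊕ Bool) = Sum.inr (Sum.inr true) :=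
            φ.injective (h1.trans hA.symm)
          simp at this
        · rw [h1] at hadjy
          exact dc_not_adj_x_y x0 (f x0) hadjy.symm
      · exact h
    have hX : ∀ x : X, φ (Sum.inl x) = Sum.inl x := by
      intro x
      have hadj : (DC X Y).Adj (φ (Sum.inl x)) (Sum.inr (Sum.inr true)) := by
        have := φ.map_rel_iff.mpr (dc_adj_x_xp (Y := Y) x)
        rwa [hA] at this
      rcases dc_nbr_xp hadj with ⟨x1, hx1⟩ | hx1
      · rw [hx1]
        have : keyCol.{u, v, w} f x0 (Sum.inl x1) = keyCol.{u, v, w} f x0 (Sum.inl x) := by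
          rw [← hx1]; exact hφ (Sum.inl x)
        rw [keyCol_inj_X f x0 this]
      · exfalso
        have : (Sum.inl x : X ⊕ Y ⊕ Bool) = Sum.inr (Sum.inr false) :=
          φ.injective (hx1.trans hB.symm)
        simp at this
    have hY : ∀ y : Y, φ (Sum.inr (Sum.inl y)) = Sum.inr (Sum.inl y) := by
      intro y
      have hadj : (DC X Y).Adj (φ (Sum.inr (Sum.inl y))) (Sum.inr (Sum.inr false)) := by
        have := φ.map_rel_iff.mpr (dc_adj_y_yp (X := X) y)
        rwa [hB] at this
      rcases dc_nbr_yp hadj with ⟨y1, hy1⟩ | hy1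
      · rw [hy1]
        have : keyCol.{u, v, w} f x0 (Sum.inr (Sum.inl y1))
            = keyCol.{u, v, w} f x0 (Sum.inr (Sum.inl y)) := by
          rw [← hy1]; exact hφ (Sum.inr (Sum.inl y))
        simp only [keyCol, ULift.ext_iff, Option.some.injEq] at this
        rw [this]
      · exfalso
        have : (Sum.inr (Sum.inl y) : X ⊕ Y ⊕ Bool) = Sum.inr (Sum.inr true) :=
          φ.injective (hy1.trans hA.symm)
        simp at this
    rcases v with x | y | b
    · exact hX x
    · exact hY y
    · cases b
      · exact hB
      · exact hA
  · -- irreducible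
    rintro a b hab - ⟨hP, -⟩
    -- both colours appear on the clique `Y ∪ {y'}`, so the merge is improper
    have hma : mergeMap a b a = a := by simp [mergeMap]
    have hmb : mergeMap a b b = a := by simp [mergeMap]
    obtain ⟨na | ya⟩ := a <;> obtain ⟨nb | yb⟩ := b
    · exact hab rfl
    · have := hP (Sum.inr (Sum.inl yb)) (Sum.inr (Sum.inr false)) (dc_adj_y_yp yb)
      simp only [Function.comp_apply] at this
      exact this ((congrArg (mergeMap _ _) (rfl : keyCol.{u,v,w} f x0 (Sum.inr (Sum.inl yb)) = ⟨some yb⟩)).trans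
        (hmb.trans (hma.symm.trans (congrArg (mergeMap _ _) rfl).symm)) |>.trans rfl) |>.elim
    · have := hP (Sum.inr (Sum.inl ya)) (Sum.inr (Sum.inr false)) (dc_adj_y_yp ya)
      simp only [Function.comp_apply] at this
      exact this (hma.trans hmb.symm) |>.elim
    · have hy : ya ≠ yb := fun hh => hab (by rw [hh])
      have := hP (Sum.inr (Sum.inl ya)) (Sum.inr (Sum.inl yb)) ((dc_adj_yy ya yb).mpr hy)
      simp only [Function.comp_apply] at this
      exact this (hma.trans hmb.symm) |>.elim

end Aux

/-- for all nonempty types `X` and `Y`, the double clique `DC(X, Y)`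
has an irreducible proper distinguishing vertex colouring. -/
theorem stmt6 (X : Type u) (Y : Type v) [Nonempty X] [Nonempty Y] :
    ∃ (C : Type (max u v)) (c : (X ⊕ Y ⊕ Bool) → C),
      ProperVertexColoring (DC X Y) c ∧ VertexDistinguishing (DC X Y) c ∧
        ∀ a b : C, a ≠ b → b ∈ Set.range c →
          ¬ (ProperVertexColoring (DC X Y) (mergeMap a b ∘ c) ∧
              VertexDistinguishing (DC X Y) (mergeMap a b ∘ c)) := by
  classical
  obtain hf | hf := Function.Embedding.total X Y
  · obtain ⟨f⟩ := hf
    obtain ⟨x0⟩ := ‹Nonempty X›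
    have hg := dc_key'.{u, v, u} f x0
    exact ⟨ULift.{u} (Option Y), keyCol f x0, hg.1, hg.2.1, hg.2.2⟩
  · obtain ⟨f⟩ := hf
    obtain ⟨y0⟩ := ‹Nonempty Y›
    have hg := dc_key'.{v, u, v} f y0
    have hg' := goodCol_comp dcSwap hg
    exact ⟨ULift.{v} (Option X), keyCol f y0 ∘ dcSwap, hg'.1, hg'.2.1, hg'.2.2⟩
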